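/- For every ν ∈ S¹, every t > 0 and all integers M, M′ ≥ 1 it holds that m_{[0,M+M′−1]}(u_{0,ν}, Q_ν(0,t)) ≥ m_{[0,M−1]}(u_{0,ν}, Q_ν(0,t)) + m_{[0,M′−1]}(u_{0,ν}, Q_ν(0,t)). -/

import Mathlib

open scoped ENNReal Classical
open Filter

/-- The canonical embedding of `ℤ³` into Euclidean `ℝ³`. -/
noncomputable def toR3 (x : ℤ × ℤ × ℤ) : EuclideanSpace ℝ (Fin 3) :=
  (WithLp.equiv 2 (Fin 3 → ℝ)).symm ![(x.1 : ℝ), (x.2.1 : ℝ), (x.2.2 : ℝ)]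

/-- The canonical embedding of `ℤ²` into Euclidean `ℝ²`. -/
noncomputable def toR2 (x : ℤ × ℤ) : EuclideanSpace ℝ (Fin 2) :=
  (WithLp.equiv 2 (Fin 2 → ℝ)).symm ![(x.1 : ℝ), (x.2 : ℝ)]

/-- The projection `P₂ : ℤ³ → ℤ²` onto the first two coordinates. -/
def P2z (x : ℤ × ℤ × ℤ) : ℤ × ℤ := (x.1, x.2.1)

/-- The rotation of `ν` by `π/2`, giving the second side direction of the square `Q_ν`. -/
noncomputable def rotDir (ν : EuclideanSpace ℝ (Fin 2)) : EuclideanSpace ℝ (Fin 2) :=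
  (WithLp.equiv 2 (Fin 2 → ℝ)).symm ![-(ν 1), ν 0]

/-- The open square `Q_ν(0,t) ⊂ ℝ²` centered at `0` with side length `t` and one pair of
sides orthogonal to `ν`. -/
noncomputable def sqQ (ν : EuclideanSpace ℝ (Fin 2)) (t : ℝ) :
    Set (EuclideanSpace ℝ (Fin 2)) :=
  {x | |@inner ℝ _ _ x ν| < t / 2 ∧ |@inner ℝ _ _ x (rotDir ν)| < t / 2}

/-- The jump configuration `u_{0,ν}`: equal to `1` where `⟨x,ν⟩ ≥ 0` and `-1` elsewhere. -/
noncomputable def u0 (ν : EuclideanSpace ℝ (Fin 2)) (x : EuclideanSpace ℝ (Fin 2)) : ℝ :=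
  if 0 ≤ @inner ℝ _ _ x ν then 1 else -1

/-- The slab energy `E_{[N,M]}(u,O)`: sum of `c(x-y)|u(x)-u(y)|` over pairs
`x, y ∈ ℤ² × {N,…,M}` with `P₂x, P₂y ∈ O`. -/
noncomputable def Eslab (c : EuclideanSpace ℝ (Fin 3) → ℝ) (N M : ℤ)
    (u : ℤ × ℤ × ℤ → ℝ) (O : Set (EuclideanSpace ℝ (Fin 2))) : ℝ≥0∞ :=
  ∑' x : ℤ × ℤ × ℤ, ∑' y : ℤ × ℤ × ℤ,
    if N ≤ x.2.2 ∧ x.2.2 ≤ M ∧ N ≤ y.2.2 ∧ y.2.2 ≤ M ∧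
        toR2 (P2z x) ∈ O ∧ toR2 (P2z y) ∈ O then
      ENNReal.ofReal (c (toR3 x - toR3 y) * |u x - u y|) else 0

/-- Admissibility for the minimum problem on `Q_ν(0,t)`: `u` is `{±1}`-valued and agrees
with `u_{0,ν}∘P₂` at all points whose projection is within distance `2L` of `∂Q_ν(0,t)`. -/
def BCslab (L : ℝ) (ν : EuclideanSpace ℝ (Fin 2)) (t : ℝ) (u : ℤ × ℤ × ℤ → ℝ) : Prop :=
  (∀ x, u x = 1 ∨ u x = -1) ∧
  ∀ x : ℤ × ℤ × ℤ, Metric.infDist (toR2 (P2z x)) (frontier (sqQ ν t)) ≤ 2 * L →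
    u x = u0 ν (toR2 (P2z x))

/-- The minimum value `m_{[N,M]}(u_{0,ν}, Q_ν(0,t))`. -/
noncomputable def mSlab (c : EuclideanSpace ℝ (Fin 3) → ℝ) (L : ℝ)
    (ν : EuclideanSpace ℝ (Fin 2)) (N M : ℤ) (t : ℝ) : ℝ :=
  (⨅ u : {u : ℤ × ℤ × ℤ → ℝ // BCslab L ν t u}, Eslab c N M u (sqQ ν t)).toReal

/-! An admissible configuration on `M + M'` layers restricts to an admissible configuration on
the lowest `M` layers and, shifted down by `M`, to one on the remaining `M'` layers: the boundary
condition only sees `P₂` and the interaction only sees `x - y`. Discarding the interactions between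
the two slabs can only lower the energy. The infima are finite, since the square contains finitely
many lattice columns, so the inequality survives the passage to real numbers. -/

def verticalShift (k : ℤ) : (ℤ × ℤ × ℤ) ≃ (ℤ × ℤ × ℤ) :=
  (Equiv.refl ℤ).prodCongr ((Equiv.refl ℤ).prodCongr (Equiv.addRight k))

@[simp]
lemma verticalShift_apply (k : ℤ) (x : ℤ × ℤ × ℤ) :
    verticalShift k x = (x.1, x.2.1, x.2.2 + k) := rfl

lemma toR3_verticalShift_sub (k : ℤ) (x y : ℤ × ℤ × ℤ) :
    toR3 (verticalShift k x) - toR3 (verticalShift k y) = toR3 x - toR3 y := by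
  ext i
  fin_cases i <;> simp [toR3]

lemma Eslab_add_add (c : EuclideanSpace ℝ (Fin 3) → ℝ) (N K k : ℤ)
    (u : ℤ × ℤ × ℤ → ℝ) (O : Set (EuclideanSpace ℝ (Fin 2))) :
    Eslab c (N + k) (K + k) u O = Eslab c N K (u ∘ verticalShift k) O := by
  unfold Eslab
  rw [← (verticalShift k).tsum_eq]
  refine tsum_congr fun x => ?_
  rw [← (verticalShift k).tsum_eq]
  refine tsum_congr fun y => ?_
  rw [toR3_verticalShift_sub]
  simp only [Function.comp_apply, verticalShift_apply, P2z, add_le_add_iff_right]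
  rfl

lemma Eslab_add_Eslab_le (c : EuclideanSpace ℝ (Fin 3) → ℝ) {N K K' : ℤ} (hN : N ≤ K + 1)
    (hK : K ≤ K') (u : ℤ × ℤ × ℤ → ℝ) (O : Set (EuclideanSpace ℝ (Fin 2))) :
    Eslab c N K u O + Eslab c (K + 1) K' u O ≤ Eslab c N K' u O := by
  unfold Eslab
  rw [← ENNReal.tsum_add]
  refine ENNReal.tsum_le_tsum fun x => ?_
  rw [← ENNReal.tsum_add]
  refine ENNReal.tsum_le_tsum fun y => ?_
  by_cases hx : toR2 (P2z x) ∈ O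
  · by_cases hy : toR2 (P2z y) ∈ O
    · simp only [hx, hy, and_true]
      split_ifs <;> first | omega | simp
    · simp [hy]
  · simp [hx]

lemma norm_sq_eq_inner_sq_add_inner_rotDir_sq {ν : EuclideanSpace ℝ (Fin 2)} (hν : ‖ν‖ = 1)
    (x : EuclideanSpace ℝ (Fin 2)) :
    ‖x‖ ^ 2 = @inner ℝ _ _ x ν ^ 2 + @inner ℝ _ _ x (rotDir ν) ^ 2 := by
  have hν' : ν 0 ^ 2 + ν 1 ^ 2 = 1 := by
    simpa [EuclideanSpace.norm_eq, Fin.sum_univ_two, Real.sqrt_eq_one] using hν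
  simp only [EuclideanSpace.norm_eq, Real.norm_eq_abs, sq_abs, Fin.sum_univ_two,
    PiLp.inner_apply, RCLike.inner_apply, conj_trivial, rotDir]
  rw [Real.sq_sqrt (by positivity)]
  simp only [WithLp.equiv_symm_apply, PiLp.toLp_apply, Matrix.cons_val_zero, Matrix.cons_val_one]
  linear_combination (-(x 0 ^ 2 + x 1 ^ 2)) * hν'

lemma sqQ_subset_ball {ν : EuclideanSpace ℝ (Fin 2)} (hν : ‖ν‖ = 1) (t : ℝ) :
    sqQ ν t ⊆ Metric.ball 0 t := by
  rintro x ⟨ha, hb⟩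
  have ht : 0 < t := by linarith [abs_nonneg (@inner ℝ _ _ x ν)]
  rw [mem_ball_zero_iff]
  refine lt_of_pow_lt_pow_left₀ 2 ht.le ?_
  rw [norm_sq_eq_inner_sq_add_inner_rotDir_sq hν]
  have ha' := sq_lt_sq' (abs_lt.1 ha).1 (abs_lt.1 ha).2
  have hb' := sq_lt_sq' (abs_lt.1 hb).1 (abs_lt.1 hb).2
  nlinarith

lemma finite_setOf_toR2_mem_of_isBounded {S : Set (EuclideanSpace ℝ (Fin 2))}
    (hS : Bornology.IsBounded S) : {p : ℤ × ℤ | toR2 p ∈ S}.Finite := by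
  obtain ⟨r, hr⟩ := hS.subset_closedBall 0
  refine (isCompact_closedBall (0 : ℤ × ℤ) r).finite_of_discrete.subset fun p hp => ?_
  have h0 : |(p.1 : ℝ)| ≤ ‖toR2 p‖ := PiLp.norm_apply_le (toR2 p) 0
  have h1 : |(p.2 : ℝ)| ≤ ‖toR2 p‖ := PiLp.norm_apply_le (toR2 p) 1
  have hp : ‖toR2 p‖ ≤ r := mem_closedBall_zero_iff.1 (hr hp)
  rw [mem_closedBall_zero_iff, Prod.norm_def, Int.norm_eq_abs, Int.norm_eq_abs, max_le_iff]
  exact ⟨by linarith, by linarith⟩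

lemma Eslab_ne_top (c : EuclideanSpace ℝ (Fin 3) → ℝ) (N K : ℤ) (u : ℤ × ℤ × ℤ → ℝ)
    {O : Set (EuclideanSpace ℝ (Fin 2))} (hO : {p : ℤ × ℤ | toR2 p ∈ O}.Finite) :
    Eslab c N K u O ≠ ⊤ := by
  set T := (Equiv.prodAssoc ℤ ℤ ℤ).symm ⁻¹' ({p : ℤ × ℤ | toR2 p ∈ O} ×ˢ Set.Icc N K)
  have hT : T.Finite := (hO.prod (Set.finite_Icc N K)).preimage (Equiv.injective _).injOn
  have hmem : ∀ x, toR2 (P2z x) ∈ O → N ≤ x.2.2 → x.2.2 ≤ K → x ∈ hT.toFinset :=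
    fun x hO hN hK => hT.mem_toFinset.2 ⟨hO, hN, hK⟩
  unfold Eslab
  rw [tsum_eq_sum (s := hT.toFinset) fun x hx =>
    ENNReal.tsum_eq_zero.2 fun y => if_neg fun h => hx (hmem x h.2.2.2.2.1 h.1 h.2.1)]
  refine ENNReal.sum_ne_top.2 fun x _ => ?_
  rw [tsum_eq_sum (s := hT.toFinset) fun y hy =>
    if_neg fun h => hy (hmem y h.2.2.2.2.2 h.2.2.1 h.2.2.2.1)]
  exact ENNReal.sum_ne_top.2 fun y _ => by split_ifs <;> simp

lemma BCslab.comp_verticalShift {L t : ℝ} {ν : EuclideanSpace ℝ (Fin 2)}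
    {u : ℤ × ℤ × ℤ → ℝ} (hu : BCslab L ν t u) (k : ℤ) :
    BCslab L ν t (u ∘ verticalShift k) :=
  ⟨fun _ => hu.1 _, fun x hx => hu.2 (verticalShift k x) hx⟩

lemma u0_eq_one_or_eq_neg_one (ν x : EuclideanSpace ℝ (Fin 2)) : u0 ν x = 1 ∨ u0 ν x = -1 := by
  unfold u0
  split_ifs <;> simp

lemma BCslab_u0_comp (L t : ℝ) (ν : EuclideanSpace ℝ (Fin 2)) :
    BCslab L ν t (fun x => u0 ν (toR2 (P2z x))) :=
  ⟨fun _ => u0_eq_one_or_eq_neg_one ν _, fun _ _ => rfl⟩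

noncomputable def mSlabInf (c : EuclideanSpace ℝ (Fin 3) → ℝ) (L : ℝ)
    (ν : EuclideanSpace ℝ (Fin 2)) (N M : ℤ) (t : ℝ) : ℝ≥0∞ :=
  ⨅ u : {u : ℤ × ℤ × ℤ → ℝ // BCslab L ν t u}, Eslab c N M u (sqQ ν t)

section mSlabInf

variable (c : EuclideanSpace ℝ (Fin 3) → ℝ) (L : ℝ) (ν : EuclideanSpace ℝ (Fin 2)) (t : ℝ)

lemma mSlabInf_ne_top (hν : ‖ν‖ = 1) (N K : ℤ) : mSlabInf c L ν N K t ≠ ⊤ :=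
  ne_top_of_le_ne_top
    (Eslab_ne_top c N K _ (finite_setOf_toR2_mem_of_isBounded
      (Metric.isBounded_ball.subset (sqQ_subset_ball hν t))))
    (iInf_le _ ⟨_, BCslab_u0_comp L t ν⟩)

lemma mSlabInf_add_le {N K K' : ℤ} (hN : N ≤ K + 1) (hK : K ≤ K') :
    mSlabInf c L ν N K t + mSlabInf c L ν (K + 1) K' t ≤ mSlabInf c L ν N K' t :=
  le_iInf fun u => le_trans (add_le_add (iInf_le _ u) (iInf_le _ u))
    (Eslab_add_Eslab_le c hN hK u _)

lemma mSlabInf_le_add_add (N K k : ℤ) :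
    mSlabInf c L ν N K t ≤ mSlabInf c L ν (N + k) (K + k) t :=
  le_iInf fun u => by
    rw [Eslab_add_add]
    exact iInf_le _ (⟨_, u.2.comp_verticalShift k⟩ : {u // BCslab L ν t u})

lemma mSlabInf_add_add (N K k : ℤ) :
    mSlabInf c L ν (N + k) (K + k) t = mSlabInf c L ν N K t :=
  le_antisymm (by simpa using mSlabInf_le_add_add c L ν t (N + k) (K + k) (-k))
    (mSlabInf_le_add_add c L ν t N K k)

end mSlabInf

theorem mSlab_superadditive_general (L : ℝ) (c : EuclideanSpace ℝ (Fin 3) → ℝ)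
    (ν : EuclideanSpace ℝ (Fin 2)) (hν : ‖ν‖ = 1) (t : ℝ) (M M' : ℕ) :
    mSlab c L ν 0 ((M : ℤ) + (M' : ℤ) - 1) t ≥
      mSlab c L ν 0 ((M : ℤ) - 1) t + mSlab c L ν 0 ((M' : ℤ) - 1) t := by
  have hfin := mSlabInf_ne_top c L ν t hν
  have hshift :
      mSlabInf c L ν ((M : ℤ) - 1 + 1) (M + M' - 1) t = mSlabInf c L ν 0 (M' - 1) t := by
    convert mSlabInf_add_add c L ν t 0 (M' - 1) M using 2 <;> ring
  have hlayers : mSlabInf c L ν 0 (M - 1) t + mSlabInf c L ν 0 (M' - 1) t ≤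
      mSlabInf c L ν 0 (M + M' - 1) t :=
    hshift ▸ mSlabInf_add_le c L ν t (by omega) (by omega)
  exact (ENNReal.toReal_add (hfin _ _) (hfin _ _)).symm.trans_le
    (ENNReal.toReal_mono (hfin _ _) hlayers)

/-- **Superadditivity in the number of layers**: for every `ν ∈ S¹`, `t > 0` and integers
`M, M′ ≥ 1`, `m_{[0,M+M′−1]}(u_{0,ν},Q_ν(0,t)) ≥ m_{[0,M−1]}(...) + m_{[0,M′−1]}(...)`. -/
theorem mSlab_superadditive
    (L Cbar c0 : ℝ) (hL : 0 < L) (hCbar : 0 < Cbar) (hc0 : 0 < c0)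
    (c : EuclideanSpace ℝ (Fin 3) → ℝ)
    (hc_nonneg : ∀ z, 0 ≤ c z)
    (hc_bd : ∀ z, c z ≤ Cbar)
    (hc_range : ∀ z : EuclideanSpace ℝ (Fin 3), L ≤ ‖z‖ → c z = 0)
    (hc_coer : ∀ z : EuclideanSpace ℝ (Fin 3), ‖z‖ = 1 → c0 ≤ c z)
    (ν : EuclideanSpace ℝ (Fin 2)) (hν : ‖ν‖ = 1)
    (t : ℝ) (ht : 0 < t)
    (M M' : ℕ) (hM : 1 ≤ M) (hM' : 1 ≤ M') :
    mSlab c L ν 0 ((M : ℤ) + (M' : ℤ) - 1) t ≥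
      mSlab c L ν 0 ((M : ℤ) - 1) t + mSlab c L ν 0 ((M' : ℤ) - 1) t :=
  mSlab_superadditive_general L c ν hν t M M'
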